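/- Let X be a finite-dimensional complex analytic manifold, let U be an open subset of X bounded for the Carathéodory pseudodistance, let M = sup_{x∈U, y∈U} c_X(x,y) and k = tanh(M), and assume 0 < k < 1. Then for all x, y ∈ U, c_U(x,y) ≥ tanh⁻¹((1/k) · tanh(c_X(x,y))); equivalently, tanh(c_U(x,y)) ≥ (1/k) · tanh(c_X(x,y)). -/

import Mathlib

open scoped Manifold ENNReal

/-- The inverse hyperbolic tangent (tanh⁻¹), the inverse of `Real.tanh` on `(-1, 1)`. -/
noncomputable def artanh (x : ℝ) : ℝ := Real.log ((1 + x) / (1 - x)) / 2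

/-- The Poincaré distance on the unit disc `Δ ⊂ ℂ`:
`ω(z, w) = tanh⁻¹ |(z - w) / (1 - w̄ z)|`. -/
noncomputable def poincareDist (z w : ℂ) : ℝ :=
  artanh ‖(z - w) / (1 - (starRingEnd ℂ) w * z)‖

/-- The Carathéodory pseudodistance of a complex manifold `X` modeled on `E`:
`c_X(x, y) = sup { ω(φ x, φ y) : φ : X → Δ holomorphic }` (with values in `[0, ∞]`). -/
noncomputable def caratheodory (E : Type*) [NormedAddCommGroup E] [NormedSpace ℂ E]
    (X : Type*) [TopologicalSpace X] [ChartedSpace E X] (x y : X) : ℝ≥0∞ :=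
  ⨆ φ ∈ {φ : X → ℂ | MDifferentiable 𝓘(ℂ, E) 𝓘(ℂ, ℂ) φ ∧ ∀ z, ‖φ z‖ < 1},
    ENNReal.ofReal (poincareDist (φ x) (φ y))

/-!
Compose a holomorphic `φ : X → Δ` with the disc automorphism sending `φ y` to `0`. On `U` the
result has modulus at most `k = tanh M`, since `tanh c_X ≤ k` there; dividing by any `K > k`
gives a holomorphic map `U → Δ` vanishing at `y`, so `tanh c_U(x, y) ≥ |m_{φ y}(φ x)| / K`
(with `m_a(w) = (w - a) / (1 - ā w)`).
Taking the supremum over `φ` and letting `K` decrease to `k` gives `tanh c_U ≥ tanh c_X / k`.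
-/

open TopologicalSpace

theorem Real.tanh_strictMono : StrictMono Real.tanh := fun a b hab => by
  rwa [← Real.artanh_lt_artanh_iff ⟨Real.neg_one_lt_tanh a, Real.tanh_lt_one a⟩
    ⟨Real.neg_one_lt_tanh b, Real.tanh_lt_one b⟩, Real.artanh_tanh, Real.artanh_tanh]

theorem Real.tanh_nonneg {x : ℝ} (hx : 0 ≤ x) : 0 ≤ Real.tanh x :=
  Real.tanh_zero ▸ Real.tanh_strictMono.monotone hx

theorem artanh_eq_real_artanh {x : ℝ} (hx : x ∈ Set.Icc (-1) 1) : artanh x = Real.artanh x := by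
  rw [Real.artanh_eq_half_log hx, artanh]
  ring

theorem tanh_artanh {x : ℝ} (hx : x ∈ Set.Ioo (-1) 1) : Real.tanh (artanh x) = x := by
  rw [artanh_eq_real_artanh (Set.Ioo_subset_Icc_self hx), Real.tanh_artanh hx]

theorem ofReal_artanh_le_iff {r : ℝ} (hr : r ∈ Set.Ico 0 1) {c : ℝ≥0∞} (hc : c ≠ ⊤) :
    ENNReal.ofReal (artanh r) ≤ c ↔ r ≤ Real.tanh c.toReal := by
  rw [ENNReal.ofReal_le_iff_le_toReal hc, ← Real.tanh_strictMono.le_iff_le,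
    tanh_artanh ⟨by linarith [hr.1], hr.2⟩]

theorem ofReal_artanh_lt_of_lt_tanh_toReal {r : ℝ} (hr : 0 ≤ r) {c : ℝ≥0∞}
    (h : r < Real.tanh c.toReal) : ENNReal.ofReal (artanh r) < c := by
  have hr1 : r < 1 := h.trans (Real.tanh_lt_one _)
  have hlt : artanh r < c.toReal := by
    rwa [← Real.tanh_strictMono.lt_iff_lt, tanh_artanh ⟨by linarith, hr1⟩]
  have h0 : 0 ≤ artanh r := by
    rw [artanh_eq_real_artanh ⟨by linarith, hr1.le⟩]
    exact Real.artanh_nonneg hr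
  exact (ENNReal.ofReal_lt_ofReal_iff'.2 ⟨hlt, h0.trans_lt hlt⟩).trans_le
    ENNReal.ofReal_toReal_le

noncomputable def pseudoHyperbolicDist (z w : ℂ) : ℝ :=
  ‖(z - w) / (1 - starRingEnd ℂ w * z)‖

theorem poincareDist_eq_artanh (z w : ℂ) :
    poincareDist z w = artanh (pseudoHyperbolicDist z w) := rfl

theorem pseudoHyperbolicDist_zero_right (z : ℂ) : pseudoHyperbolicDist z 0 = ‖z‖ := by
  simp [pseudoHyperbolicDist]

theorem pseudoHyperbolicDist_nonneg (z w : ℂ) : 0 ≤ pseudoHyperbolicDist z w := norm_nonneg _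

theorem norm_one_sub_conj_mul_sq_sub_norm_sub_sq (z w : ℂ) :
    ‖1 - starRingEnd ℂ w * z‖ ^ 2 - ‖z - w‖ ^ 2 = (1 - ‖w‖ ^ 2) * (1 - ‖z‖ ^ 2) := by
  simp only [Complex.sq_norm, Complex.normSq_apply, Complex.sub_re, Complex.sub_im,
    Complex.mul_re, Complex.mul_im, Complex.conj_re, Complex.conj_im, Complex.one_re,
    Complex.one_im]
  ring

theorem norm_sub_lt_norm_one_sub_conj_mul {z w : ℂ} (hz : ‖z‖ < 1) (hw : ‖w‖ < 1) :
    ‖z - w‖ < ‖1 - starRingEnd ℂ w * z‖ := by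
  have hpos : 0 < (1 - ‖w‖ ^ 2) * (1 - ‖z‖ ^ 2) := by
    have := norm_nonneg z
    have := norm_nonneg w
    apply mul_pos <;> nlinarith
  refine lt_of_pow_lt_pow_left₀ 2 (norm_nonneg _) ?_
  linarith [norm_one_sub_conj_mul_sq_sub_norm_sub_sq z w]

theorem one_sub_conj_mul_ne_zero {z w : ℂ} (hz : ‖z‖ < 1) (hw : ‖w‖ < 1) :
    1 - starRingEnd ℂ w * z ≠ 0 :=
  norm_pos_iff.1 ((norm_nonneg _).trans_lt (norm_sub_lt_norm_one_sub_conj_mul hz hw))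

theorem pseudoHyperbolicDist_lt_one {z w : ℂ} (hz : ‖z‖ < 1) (hw : ‖w‖ < 1) :
    pseudoHyperbolicDist z w < 1 := by
  have h := norm_sub_lt_norm_one_sub_conj_mul hz hw
  rw [pseudoHyperbolicDist, norm_div, div_lt_one ((norm_nonneg _).trans_lt h)]
  exact h

theorem pseudoHyperbolicDist_mem_Ico {z w : ℂ} (hz : ‖z‖ < 1) (hw : ‖w‖ < 1) :
    pseudoHyperbolicDist z w ∈ Set.Ico 0 1 :=
  ⟨pseudoHyperbolicDist_nonneg z w, pseudoHyperbolicDist_lt_one hz hw⟩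

theorem tanh_poincareDist {z w : ℂ} (hz : ‖z‖ < 1) (hw : ‖w‖ < 1) :
    Real.tanh (poincareDist z w) = pseudoHyperbolicDist z w :=
  tanh_artanh (Set.Ico_subset_Ioo_left (by norm_num) (pseudoHyperbolicDist_mem_Ico hz hw))

section Caratheodory

variable {E : Type*} [NormedAddCommGroup E] [NormedSpace ℂ E]
  {X : Type*} [TopologicalSpace X] [ChartedSpace E X] {φ : X → ℂ}

theorem ofReal_poincareDist_le_caratheodory (hφ : MDifferentiable 𝓘(ℂ, E) 𝓘(ℂ, ℂ) φ)
    (hφ1 : ∀ z, ‖φ z‖ < 1) (x y : X) :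
    ENNReal.ofReal (poincareDist (φ x) (φ y)) ≤ caratheodory E X x y :=
  le_iSup₂ (f := fun (φ : X → ℂ) (_ : MDifferentiable 𝓘(ℂ, E) 𝓘(ℂ, ℂ) φ ∧ ∀ z, ‖φ z‖ < 1) =>
    ENNReal.ofReal (poincareDist (φ x) (φ y))) φ ⟨hφ, hφ1⟩

theorem pseudoHyperbolicDist_le_tanh_of_caratheodory_le
    (hφ : MDifferentiable 𝓘(ℂ, E) 𝓘(ℂ, ℂ) φ) (hφ1 : ∀ z, ‖φ z‖ < 1) {x y : X} {M : ℝ≥0∞}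
    (hM : M ≠ ⊤) (h : caratheodory E X x y ≤ M) :
    pseudoHyperbolicDist (φ x) (φ y) ≤ Real.tanh M.toReal :=
  (ofReal_artanh_le_iff (pseudoHyperbolicDist_mem_Ico (hφ1 x) (hφ1 y)) hM).1
    ((ofReal_poincareDist_le_caratheodory hφ hφ1 x y).trans h)

theorem exists_lt_pseudoHyperbolicDist_of_lt_tanh {x y : X} {r : ℝ} (hr : 0 ≤ r)
    (h : r < Real.tanh (caratheodory E X x y).toReal) :
    ∃ φ : X → ℂ, MDifferentiable 𝓘(ℂ, E) 𝓘(ℂ, ℂ) φ ∧ (∀ z, ‖φ z‖ < 1) ∧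
      r < pseudoHyperbolicDist (φ x) (φ y) := by
  have hlt := ofReal_artanh_lt_of_lt_tanh_toReal hr h
  rw [caratheodory] at hlt
  obtain ⟨φ, hφ⟩ := lt_iSup_iff.1 hlt
  obtain ⟨⟨hφ, hφ1⟩, hφr⟩ := lt_iSup_iff.1 hφ
  refine ⟨φ, hφ, hφ1, ?_⟩
  have h' := Real.tanh_strictMono (ENNReal.ofReal_lt_ofReal_iff'.1 hφr).1
  rwa [tanh_artanh ⟨by linarith, h.trans (Real.tanh_lt_one _)⟩,
    tanh_poincareDist (hφ1 x) (hφ1 y)] at h'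

/-- The witness is `(w ↦ (w - φ y) / (1 - (φ y)‾ w)) ∘ φ` divided by `K`: it maps into the disc
and vanishes at `y`. -/
theorem ofReal_artanh_div_le_caratheodory (hφ : MDifferentiable 𝓘(ℂ, E) 𝓘(ℂ, ℂ) φ)
    (hφ1 : ∀ z, ‖φ z‖ < 1) {y : X} {K : ℝ} (hK : ∀ z, pseudoHyperbolicDist (φ z) (φ y) < K)
    (x : X) :
    ENNReal.ofReal (artanh (pseudoHyperbolicDist (φ x) (φ y) / K)) ≤ caratheodory E X x y := by
  have hK0 : 0 < K := by simpa [pseudoHyperbolicDist] using hK y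
  set a := φ y
  let ψ : X → ℂ := fun z => (K : ℂ)⁻¹ * ((φ z - a) / (1 - starRingEnd ℂ a * φ z))
  have hψ_norm : ∀ z, ‖ψ z‖ = pseudoHyperbolicDist (φ z) a / K := fun z => by
    simp [ψ, pseudoHyperbolicDist, abs_of_pos hK0, div_eq_inv_mul]
  have hψ : MDifferentiable 𝓘(ℂ, E) 𝓘(ℂ, ℂ) ψ := fun z => by
    have hden := one_sub_conj_mul_ne_zero (hφ1 z) (hφ1 y)
    have hg : DifferentiableAt ℂ
        (fun w : ℂ => (K : ℂ)⁻¹ * ((w - a) / (1 - starRingEnd ℂ a * w))) (φ z) := by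
      fun_prop (disch := exact hden)
    exact hg.mdifferentiableAt.comp z (hφ z)
  have hψ1 : ∀ z, ‖ψ z‖ < 1 := fun z => by
    rw [hψ_norm, div_lt_one hK0]
    exact hK z
  have hψy : ψ y = 0 := by simp [ψ, a]
  have h := ofReal_poincareDist_le_caratheodory hψ hψ1 x y
  rwa [hψy, poincareDist_eq_artanh, pseudoHyperbolicDist_zero_right, hψ_norm] at h

theorem MDifferentiable.comp_opens_val (hφ : MDifferentiable 𝓘(ℂ, E) 𝓘(ℂ, ℂ) φ)
    (U : Opens X) : MDifferentiable 𝓘(ℂ, E) 𝓘(ℂ, ℂ) (fun z : U => φ z) :=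
  hφ.comp (contMDiff_subtype_val.mdifferentiable one_ne_zero)

theorem tanh_caratheodory_le_mul_tanh_caratheodory_opens {U : Opens X} {M : ℝ≥0∞}
    (hM : M ≠ ⊤) (hUM : ∀ z w : U, caratheodory E X z w ≤ M) {x y : U}
    (hxy : caratheodory E U x y ≠ ⊤) :
    Real.tanh (caratheodory E X x y).toReal ≤
      Real.tanh M.toReal * Real.tanh (caratheodory E U x y).toReal := by
  set k := Real.tanh M.toReal
  set t := Real.tanh (caratheodory E X x y).toReal
  set T := Real.tanh (caratheodory E U x y).toReal
  by_contra! hlt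
  have hk0 : 0 ≤ k := Real.tanh_nonneg ENNReal.toReal_nonneg
  have hT0 : 0 ≤ T := Real.tanh_nonneg ENNReal.toReal_nonneg
  have hT1 : T < 1 := Real.tanh_lt_one _
  -- `K * T = k * T + (t - k * T) * T < t` because `T < 1`.
  set K := k + (t - k * T)
  have hkK : k < K := by linarith
  obtain ⟨φ, hφ, hφ1, hKT⟩ :=
    exists_lt_pseudoHyperbolicDist_of_lt_tanh (x := (x : X)) (y := y) (r := K * T)
      (by positivity) (by nlinarith)
  have hbound : ∀ z : U, pseudoHyperbolicDist (φ z) (φ y) < K := fun z =>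
    (pseudoHyperbolicDist_le_tanh_of_caratheodory_le hφ hφ1 hM (hUM z y)).trans_lt hkK
  have hK0 : 0 < K := hk0.trans_lt hkK
  have hle := (ofReal_artanh_le_iff ⟨div_nonneg (pseudoHyperbolicDist_nonneg _ _) hK0.le,
    (div_lt_one hK0).2 (hbound x)⟩ hxy).1
    (ofReal_artanh_div_le_caratheodory (hφ.comp_opens_val U) (fun z => hφ1 z) hbound x)
  rw [div_le_iff₀ hK0] at hle
  linarith

end Caratheodory

theorem caratheodory_opens_ge_artanh_general
    {E : Type*} [NormedAddCommGroup E] [NormedSpace ℂ E]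
    {X : Type*} [TopologicalSpace X] [ChartedSpace E X]
    (U : TopologicalSpace.Opens X)
    (M : ℝ≥0∞) (hM : M = ⨆ (x : U) (y : U), caratheodory E X (x : X) (y : X)) (hbdd : M ≠ ⊤)
    (k : ℝ) (hk : k = Real.tanh M.toReal) (hk0 : 0 < k) :
    ∀ x y : U,
      ENNReal.ofReal (artanh ((1 / k) * Real.tanh (caratheodory E X (x : X) (y : X)).toReal)) ≤
        caratheodory E U x y ∧
      (caratheodory E U x y ≠ ⊤ →
        (1 / k) * Real.tanh (caratheodory E X (x : X) (y : X)).toReal ≤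
          Real.tanh (caratheodory E U x y).toReal) := by
  intro x y
  have hUM : ∀ z w : U, caratheodory E X z w ≤ M := fun z w =>
    hM ▸ le_iSup₂ (f := fun z w : U => caratheodory E X z w) z w
  have hdiv : caratheodory E U x y ≠ ⊤ →
      (1 / k) * Real.tanh (caratheodory E X x y).toReal ≤
        Real.tanh (caratheodory E U x y).toReal := fun hxy => by
    rw [one_div_mul_eq_div, div_le_iff₀' hk0, hk]
    exact tanh_caratheodory_le_mul_tanh_caratheodory_opens hbdd hUM hxy
  refine ⟨?_, hdiv⟩
  rcases eq_or_ne (caratheodory E U x y) ⊤ with htop | hxy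
  · simp [htop]
  · exact (ofReal_artanh_le_iff ⟨mul_nonneg (by positivity) (Real.tanh_nonneg
      ENNReal.toReal_nonneg), (hdiv hxy).trans_lt (Real.tanh_lt_one _)⟩ hxy).2 (hdiv hxy)

/-- Let `X` be a finite-dimensional complex analytic manifold, `U ⊆ X` an open subset bounded
for the Carathéodory pseudodistance, `M = sup_{x,y ∈ U} c_X(x,y)`, `k = tanh M`, with
`0 < k < 1`. Then for all `x, y ∈ U`, `c_U(x,y) ≥ tanh⁻¹ ((1/k) · tanh (c_X(x,y)))`;
equivalently `tanh (c_U(x,y)) ≥ (1/k) · tanh (c_X(x,y))` (the latter stated when `c_U(x,y)`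
is finite, it being trivial otherwise since `tanh` tends to `1` at `∞`). -/
theorem caratheodory_opens_ge_artanh
    {E : Type*} [NormedAddCommGroup E] [NormedSpace ℂ E] [FiniteDimensional ℂ E]
    {X : Type*} [TopologicalSpace X] [ChartedSpace E X] [IsManifold 𝓘(ℂ, E) (⊤ : WithTop ℕ∞) X]
    (U : TopologicalSpace.Opens X)
    (M : ℝ≥0∞) (hM : M = ⨆ (x : U) (y : U), caratheodory E X (x : X) (y : X)) (hbdd : M ≠ ⊤)
    (k : ℝ) (hk : k = Real.tanh M.toReal) (hk0 : 0 < k) (hk1 : k < 1) :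
    ∀ x y : U,
      ENNReal.ofReal (artanh ((1 / k) * Real.tanh (caratheodory E X (x : X) (y : X)).toReal)) ≤
        caratheodory E U x y ∧
      (caratheodory E U x y ≠ ⊤ →
        (1 / k) * Real.tanh (caratheodory E X (x : X) (y : X)).toReal ≤
          Real.tanh (caratheodory E U x y).toReal) :=
  caratheodory_opens_ge_artanh_general U M hM hbdd k hk hk0
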